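/- arXiv:alg-geom/9411014 — 2 statements merged into one kernel-verified Lean document; each statement's English description precedes it below -/
import Mathlib

section
/- Let D = (C_1,…,C_r) be a lexicographic northwest diagram. Then the maximal intersection blowup D̂ — the diagram whose columns are the distinct sets of the form ⋂_{j∈S} C_j for nonempty S ⊆ {1,…,r}, each appearing once and arranged in lexicographic order — is again a lexicographic northwest diagram. -/
/-- A diagram, given as a list of columns `C : Fin r → Finset ℕ`, is *northwest* if
for all `j ≤ j'`, `i ∈ C j` and `i' ∈ C j'` imply `min i i' ∈ C j`. -/
def IsNorthwest {r : ℕ} (C : Fin r → Finset ℕ) : Prop :=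
  ∀ j j' : Fin r, j ≤ j' → ∀ i ∈ C j, ∀ i' ∈ C j', min i i' ∈ C j

/-- `A` is an *initial subset* of `B` : `A ⊊ B` and every element of `B \ A` is greater
than every element of `A`. -/
def InitSub (A B : Finset ℕ) : Prop :=
  A ⊂ B ∧ ∀ x ∈ B \ A, ∀ y ∈ A, y < x

/-- Lexicographic comparison of finite subsets of `ℕ`, comparing the increasing lists of
elements: `A <lex B` iff the sorted list of `A` is smaller than that of `B` in the
(strict) lexicographic order on lists (in particular a proper initial segment is
smaller). -/
def LexLT (A B : Finset ℕ) : Prop :=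
  List.Lex (· < ·) (A.sort (· ≤ ·)) (B.sort (· ≤ ·))

/-- A list of columns is *lexicographic* if it is strictly increasing in `LexLT`
(in particular the columns are pairwise distinct). -/
def IsLex {r : ℕ} (C : Fin r → Finset ℕ) : Prop :=
  ∀ a b : Fin r, a < b → LexLT (C a) (C b)

/-!
Enumerating the distinct intersections in lexicographic order gives a lexicographic diagram
by construction; the content is northwestness. Let `A = ⋂_{j ∈ S} C_j <lex B = ⋂_{j ∈ S'} C_j`,
`i ∈ A`, `i' ∈ B` and `i' < i`. Comparing the sorted lists of `A` and `B`, either `i' ∈ A`, or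
some `a < i'` lies in `A` but not in `C_{j₀}` for some `j₀ ∈ S'`. In the second case every
`j ∈ S` satisfies `j ≤ j₀`, since otherwise northwestness of `(C_{j₀}, C_j)` at `(i', a)` would
put `a` into `C_{j₀}`; so northwestness of `(C_j, C_{j₀})` at `(i, i')` puts `i'` into `C_j`.
-/

theorem List.Lex.mem_or_exists_lt_notMem {α : Type*} [LinearOrder α] {u v : List α}
    (h : List.Lex (· < ·) u v) (hu : u.Pairwise (· < ·)) (hv : v.Pairwise (· < ·))
    {x y : α} (hx : x ∈ u) (hy : y ∈ v) (hyx : y < x) :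
    y ∈ u ∨ ∃ a ∈ u, a ∉ v ∧ a < y := by
  induction h with
  | nil => simp at hx
  | @cons b u v _ ih =>
    rw [List.pairwise_cons] at hu hv
    rcases List.mem_cons.1 hy with rfl | hyv
    · exact .inl List.mem_cons_self
    rcases List.mem_cons.1 hx with rfl | hxu
    · exact absurd (hv.1 y hyv) hyx.not_gt
    rcases ih hu.2 hv.2 hxu hyv with hyu | ⟨a, hau, hav, hay⟩
    · exact .inl (List.mem_cons_of_mem _ hyu)
    · refine .inr ⟨a, List.mem_cons_of_mem _ hau, fun hab => ?_, hay⟩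
      rcases List.mem_cons.1 hab with rfl | hav'
      exacts [(hu.1 a hau).false, hav hav']
  | @rel b _ c v hbc =>
    rw [List.pairwise_cons] at hv
    refine .inr ⟨b, List.mem_cons_self, fun hbv => ?_, ?_⟩
    · rcases List.mem_cons.1 hbv with rfl | hbv
      exacts [hbc.false, (hv.1 b hbv).not_gt hbc]
    · rcases List.mem_cons.1 hy with rfl | hyv
      exacts [hbc, hbc.trans (hv.1 y hyv)]

theorem LexLT.mem_or_exists_lt_notMem {A B : Finset ℕ} (h : LexLT A B) {x y : ℕ}
    (hx : x ∈ A) (hy : y ∈ B) (hyx : y < x) : y ∈ A ∨ ∃ a ∈ A, a ∉ B ∧ a < y := by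
  simpa only [Finset.mem_sort] using
    List.Lex.mem_or_exists_lt_notMem h (Finset.sortedLT_sort A).pairwise
      (Finset.sortedLT_sort B).pairwise ((Finset.mem_sort _).2 hx) ((Finset.mem_sort _).2 hy) hyx

theorem lexLT_iff_sort_lt {A B : Finset ℕ} : LexLT A B ↔ A.sort (· ≤ ·) < B.sort (· ≤ ·) :=
  Iff.rfl

theorem Finset.sort_injective {α : Type*} [LinearOrder α] :
    Function.Injective (fun A : Finset α => A.sort (· ≤ ·)) :=
  Function.LeftInverse.injective (g := List.toFinset) fun A => Finset.sort_toFinset A _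

theorem Set.Finite.exists_strictMono_comp_enum {α β : Type*} [LinearOrder β] {f : α → β}
    (hf : Function.Injective f) {s : Set α} (hs : s.Finite) :
    ∃ (m : ℕ) (E : Fin m → α), Set.range E = s ∧ StrictMono (f ∘ E) := by
  let : LinearOrder α := LinearOrder.lift' f hf
  exact ⟨_, hs.toFinset.orderEmbOfFin rfl, by simp, (hs.toFinset.orderEmbOfFin rfl).strictMono⟩

section Northwest

variable {r : ℕ} {C : Fin r → Finset ℕ}

theorem IsNorthwest.min_mem_of_lexLT (hC : IsNorthwest C) {A B : Finset ℕ}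
    (hA : ∃ (S : Finset (Fin r)) (hS : S.Nonempty), S.inf' hS C = A)
    (hB : ∃ (S : Finset (Fin r)) (hS : S.Nonempty), S.inf' hS C = B)
    (hAB : LexLT A B) {i i' : ℕ} (hi : i ∈ A) (hi' : i' ∈ B) : min i i' ∈ A := by
  obtain ⟨S, hS, rfl⟩ := hA
  obtain ⟨S', hS', rfl⟩ := hB
  rcases le_or_gt i i' with hii' | hi'i
  · rwa [min_eq_left hii']
  rw [min_eq_right hi'i.le]
  rcases hAB.mem_or_exists_lt_notMem hi hi' hi'i with hi'A | ⟨a, haA, haB, hai'⟩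
  · exact hi'A
  obtain ⟨j₀, hj₀, haj₀⟩ : ∃ j₀ ∈ S', a ∉ C j₀ := by simpa [Finset.mem_inf'] using haB
  rw [Finset.mem_inf'] at hi hi' haA ⊢
  intro j hj
  rcases le_total j j₀ with hjj₀ | hj₀j
  · simpa [min_eq_right hi'i.le] using hC j j₀ hjj₀ i (hi j hj) i' (hi' j₀ hj₀)
  · simpa [min_eq_right hai'.le, haj₀] using hC j₀ j hj₀j i' (hi' j₀ hj₀) a (haA j hj)

theorem IsNorthwest.of_isLex_of_forall_inf' (hC : IsNorthwest C) {m : ℕ}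
    {E : Fin m → Finset ℕ} (hE : IsLex E)
    (hEC : ∀ k, ∃ (S : Finset (Fin r)) (hS : S.Nonempty), S.inf' hS C = E k) :
    IsNorthwest E := by
  intro k k' hkk' i hi i' hi'
  rcases hkk'.eq_or_lt with rfl | hkk'
  · rcases min_choice i i' with h | h <;> rwa [h]
  · exact hC.min_mem_of_lexLT (hEC k) (hEC k') (hE k k' hkk') hi hi'

end Northwest

theorem maximal_blowup_lex_northwest_general (r : ℕ) (C : Fin r → Finset ℕ)
    (hNW : IsNorthwest C) :
    ∃ (m : ℕ) (E : Fin m → Finset ℕ),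
      Function.Injective E ∧
      (∀ A : Finset ℕ,
        (∃ k, E k = A) ↔ ∃ (S : Finset (Fin r)) (hS : S.Nonempty), S.inf' hS C = A) ∧
      IsLex E ∧ IsNorthwest E := by
  let blowup : {S : Finset (Fin r) // S.Nonempty} → Finset ℕ := fun S => S.1.inf' S.2 C
  obtain ⟨m, E, hrange, hmono⟩ :=
    (Set.finite_range blowup).exists_strictMono_comp_enum Finset.sort_injective
  have hmem (A : Finset ℕ) :
      (∃ k, E k = A) ↔ ∃ (S : Finset (Fin r)) (hS : S.Nonempty), S.inf' hS C = A := by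
    rw [← Set.mem_range, hrange]
    simp [blowup]
  have hlex : IsLex E := fun a b hab => lexLT_iff_sort_lt.2 (hmono hab)
  exact ⟨m, E, hmono.injective.of_comp, hmem, hlex,
    hNW.of_isLex_of_forall_inf' hlex fun k => (hmem _).1 ⟨k, rfl⟩⟩

/-- The maximal intersection blowup `D̂` of a lexicographic northwest diagram — the
diagram whose columns are the distinct intersections `⋂_{j ∈ S} C j` over nonempty
`S`, each appearing once, in lexicographic order — is again a lexicographic northwest
diagram. -/
theorem maximal_blowup_lex_northwest (r : ℕ) (C : Fin r → Finset ℕ)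
    (hNW : IsNorthwest C) (hlex : IsLex C) :
    ∃ (m : ℕ) (E : Fin m → Finset ℕ),
      Function.Injective E ∧
      (∀ A : Finset ℕ,
        (∃ k, E k = A) ↔ ∃ (S : Finset (Fin r)) (hS : S.Nonempty), S.inf' hS C = A) ∧
      IsLex E ∧ IsNorthwest E :=
  maximal_blowup_lex_northwest_general r C hNW
end

section
/- Let D = (C_1,…,C_r) be a lexicographic northwest diagram that is closed under intersections (for every nonempty S ⊆ {1,…,r}, the set ⋂_{j∈S} C_j equals some column of D). Then the last column C_r covers at most one column of D, and at most one column of D covers C_r. That is: (i) if C and C' are columns of D each covered by C_r, then C = C'; (ii) if C and C' are columns of D each covering C_r, then C = C'. -/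
/-- `B` *covers* `A` among the columns of `C` : `A ⊊ B` with no column strictly
between. -/
def CoversIn {r : ℕ} (C : Fin r → Finset ℕ) (A B : Finset ℕ) : Prop :=
  A ⊂ B ∧ ∀ k : Fin r, ¬(A ⊂ C k ∧ C k ⊂ B)

/-!
For `A ⊆ B`, `A <lex B` holds exactly when `A` is an initial segment of `B`. Every column is
lexicographically below the last one `L`, so the columns covered by `L` are initial segments of
`L`, hence nested, and two distinct ones cannot both be covered. If two distinct columns `C p`,
`C q` with `p ≤ q` cover `L`, closure under intersection forces `C p ∩ C q = L`; every element of
`C q \ L` then misses `C p` and by the northwest property exceeds all of `C p ⊇ L`, so `L` is an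
initial segment of `C q`, i.e. `L <lex C q`, against the maximality of `L`.
-/

open Finset

theorem initSub_insert_iff {A B : Finset ℕ} {m : ℕ} (hm : ∀ x ∈ B, m < x) (hmA : m ∉ A)
    (hAB : A ⊆ B) : InitSub (insert m A) (insert m B) ↔ InitSub A B := by
  have hmB : m ∉ B := fun h => lt_irrefl m (hm m h)
  unfold InitSub
  rw [insert_sdiff_insert, sdiff_insert_of_notMem hmB]
  constructor
  · rintro ⟨hss, hlt⟩
    exact ⟨hAB.ssubset_of_ne (by rintro rfl; exact hss.ne rfl),
      fun x hx y hy => hlt x hx y (mem_insert_of_mem hy)⟩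
  · rintro ⟨hss, hlt⟩
    refine ⟨(insert_subset_insert m hAB).ssubset_of_ne fun h => hss.ne ?_, fun x hx y hy => ?_⟩
    · simpa [erase_insert hmA, erase_insert hmB] using congrArg (erase · m) h
    · rcases mem_insert.1 hy with rfl | hy
      · exact hm x (mem_sdiff.1 hx).1
      · exact hlt x hx y hy

theorem lexLT_iff_initSub {A B : Finset ℕ} (h : A ⊆ B) : LexLT A B ↔ InitSub A B := by
  induction B using induction_on_min generalizing A with
  | empty =>
    obtain rfl := subset_empty.1 h
    simp [LexLT, InitSub]
  | insert m s hm ih =>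
    have hms : m ∉ s := fun h => lt_irrefl m (hm m h)
    have hsort : (insert m s).sort = m :: s.sort :=
      sort_insert _ (fun b hb => (hm b hb).le) hms
    by_cases hmA : m ∈ A
    · obtain ⟨A, hmA', rfl⟩ : ∃ A', m ∉ A' ∧ A = insert m A' :=
        ⟨A.erase m, notMem_erase m A, (insert_erase hmA).symm⟩
      have hAs : A ⊆ s := fun x hx =>
        (mem_insert.1 (h (mem_insert_of_mem hx))).resolve_left
          (fun hxm => hmA' (hxm ▸ hx))
      rw [initSub_insert_iff hm hmA' hAs, ← ih hAs, LexLT, LexLT, hsort,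
        sort_insert _ (fun b hb => (hm b (hAs hb)).le) hmA', List.lex_cons_iff]
    · have hAs : A ⊆ s := fun x hx =>
        (mem_insert.1 (h hx)).resolve_left (fun hxm => hmA (hxm ▸ hx))
      rcases A.eq_empty_or_nonempty with rfl | ⟨a, ha⟩
      · simp [LexLT, InitSub, hsort]
      -- `m` lies in `insert m s \ A` below every element of `A`, so both sides fail
      · have hmin : ∀ b ∈ A, m < b := fun b hb => hm b (hAs hb)
        refine iff_of_false (fun hlex => ?_) (fun hinit => ?_)
        · obtain ⟨b, t, hbt⟩ := List.exists_cons_of_ne_nil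
            (List.ne_nil_of_mem (mem_sort (· ≤ ·) |>.2 ha))
          have hb : b ∈ A := (mem_sort (· ≤ ·)).1 (hbt ▸ List.mem_cons_self)
          rw [LexLT, hsort, hbt, List.cons_lex_cons_iff] at hlex
          have := hmin b hb
          omega
        · have := hinit.2 m (mem_sdiff.2 ⟨mem_insert_self m s, hmA⟩) a ha
          have := hmin a ha
          omega

theorem LexLT.asymm {A B : Finset ℕ} (h : LexLT A B) : ¬LexLT B A :=
  _root_.asymm (r := List.Lex (· < ·)) h

theorem InitSub.subset_or_subset {A A' B : Finset ℕ} (hA : InitSub A B) (hA' : InitSub A' B) :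
    A ⊆ A' ∨ A' ⊆ A := by
  by_contra! h
  obtain ⟨u, huA, huA'⟩ := not_subset.1 h.1
  obtain ⟨v, hvA', hvA⟩ := not_subset.1 h.2
  have := hA'.2 u (mem_sdiff.2 ⟨hA.1.subset huA, huA'⟩) v hvA'
  have := hA.2 v (mem_sdiff.2 ⟨hA'.1.subset hvA', hvA⟩) u huA
  omega

section Columns

variable {r : ℕ} {C : Fin r → Finset ℕ}

theorem CoversIn.eq_or_eq {A B : Finset ℕ} (h : CoversIn C A B) (k : Fin r) (hA : A ⊆ C k)
    (hB : C k ⊆ B) : C k = A ∨ C k = B := by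
  by_contra! hne
  exact h.2 k ⟨hA.ssubset_of_ne hne.1.symm, hB.ssubset_of_ne hne.2⟩

theorem IsNorthwest.lt_of_mem_of_notMem (hNW : IsNorthwest C) {p q : Fin r} (hpq : p ≤ q)
    {x : ℕ} (hxq : x ∈ C q) (hxp : x ∉ C p) {i : ℕ} (hi : i ∈ C p) : i < x := by
  by_contra! h
  exact hxp (min_eq_right h ▸ hNW p q hpq i hi x hxq)

theorem IsNorthwest.initSub_inter (hNW : IsNorthwest C) {p q : Fin r} (hpq : p ≤ q)
    (hne : C p ∩ C q ≠ C q) : InitSub (C p ∩ C q) (C q) := by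
  refine ⟨inter_subset_right.ssubset_of_ne hne, fun x hx y hy => ?_⟩
  obtain ⟨hxq, hxpq⟩ := mem_sdiff.1 hx
  exact hNW.lt_of_mem_of_notMem hpq hxq (fun hxp => hxpq (mem_inter.2 ⟨hxp, hxq⟩))
    (mem_inter.1 hy).1

theorem exists_eq_inter_of_inf'_closed
    (hclosed : ∀ (S : Finset (Fin r)) (hS : S.Nonempty), ∃ j, S.inf' hS C = C j) (a b : Fin r) :
    ∃ k, C k = C a ∩ C b := by
  obtain ⟨k, hk⟩ := hclosed {a, b} (insert_nonempty a {b})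
  exact ⟨k, by simp [← hk]⟩

theorem inter_eq_of_coversIn
    (hclosed : ∀ (S : Finset (Fin r)) (hS : S.Nonempty), ∃ j, S.inf' hS C = C j)
    {L : Finset ℕ} {a b : Fin r} (ha : CoversIn C L (C a)) (hb : CoversIn C L (C b))
    (hab : C a ≠ C b) : C a ∩ C b = L := by
  obtain ⟨k, hk⟩ := exists_eq_inter_of_inf'_closed hclosed a b
  rcases ha.eq_or_eq k (hk ▸ subset_inter ha.1.subset hb.1.subset)
    (hk ▸ inter_subset_left) with h | h
  · rw [← hk, h]
  · have hab' : C a ⊆ C b := h ▸ hk ▸ inter_subset_right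
    rcases hb.eq_or_eq a ha.1.subset hab' with h' | h'
    · exact absurd h' ha.1.ne'
    · exact absurd h' hab

end Columns

/-- Lemma `maxmin` (b): in a lexicographic northwest diagram that is closed under
intersections, the last column covers at most one column and is covered by at most one
column. -/
theorem last_column_covers_unique (r : ℕ) (hr : 1 ≤ r)
    (C : Fin r → Finset ℕ) (hNW : IsNorthwest C) (hlex : IsLex C)
    (hclosed : ∀ (S : Finset (Fin r)) (hS : S.Nonempty), ∃ j, S.inf' hS C = C j) :
    (∀ a b : Fin r,
      CoversIn C (C a) (C ⟨r - 1, by omega⟩) → CoversIn C (C b) (C ⟨r - 1, by omega⟩) →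
      C a = C b) ∧
    (∀ a b : Fin r,
      CoversIn C (C ⟨r - 1, by omega⟩) (C a) → CoversIn C (C ⟨r - 1, by omega⟩) (C b) →
      C a = C b) := by
  set last : Fin r := ⟨r - 1, by omega⟩
  have hlast : ∀ a, C a ≠ C last → LexLT (C a) (C last) := fun a ha =>
    hlex a last (lt_of_le_of_ne (Fin.le_def.2 (by simp only [last]; omega))
      (fun h => ha (congrArg C h)))
  refine ⟨fun a b ha hb => ?_, fun a b ha hb => ?_⟩
  · have hinit : ∀ c, CoversIn C (C c) (C last) → InitSub (C c) (C last) := fun c hc =>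
      (lexLT_iff_initSub hc.1.subset).1 (hlast c hc.1.ne)
    rcases (hinit a ha).subset_or_subset (hinit b hb) with h | h
    · exact ((ha.eq_or_eq b h hb.1.subset).resolve_right hb.1.ne).symm
    · exact (hb.eq_or_eq a h ha.1.subset).resolve_right ha.1.ne
  · by_contra hab
    have hI := inter_eq_of_coversIn hclosed ha hb hab
    wlog hle : a ≤ b generalizing a b
    · exact this b a hb ha (Ne.symm hab) (by rwa [inter_comm]) (le_of_not_ge hle)
    have hinit := hNW.initSub_inter hle (hI ▸ hb.1.ne)
    rw [hI] at hinit
    exact ((lexLT_iff_initSub hinit.1.subset).2 hinit).asymm (hlast b hb.1.ne')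
end
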